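/- Let L ⊆ Σ* and let D be a DFA accepting exactly L, with initial state s; write q·w for evalFrom(q,w). Suppose there exist states q, q₁, q₂ and words ω, x, y, z ∈ Σ* such that: s·ω = q; q·x = q₁ and q·y = q₂; q₁·x = q₁ and q₁·y = q₁; q₂·x = q₂ and q₂·y = q₂; and exactly one of the states q₁·z, q₂·z is accepting (so L is of type (*′)). Then L is not recognized by any PRA-C with any interval. -/

import Mathlib

/-- A real square matrix is doubly stochastic if all entries are nonnegative and
every row and every column sums to 1. -/
def DoublyStochastic {n : ℕ} (A : Matrix (Fin n) (Fin n) ℝ) : Prop :=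
  (∀ i j, 0 ≤ A i j) ∧ (∀ i, ∑ j, A i j = 1) ∧ (∀ j, ∑ i, A i j = 1)

/-- A 1-way probabilistic reversible C-automaton (PRA-C) over input alphabet `α`:
a finite state set `Fin n`, an initial state, a set of accepting states, and
a doubly stochastic matrix for each symbol of the working alphabet
(the letters of `α` together with the end-markers `#` and `$`). -/
structure PRAC (α : Type) where
  n : ℕ
  q0 : Fin n
  F : Finset (Fin n)
  V : α → Matrix (Fin n) (Fin n) ℝ
  Vhash : Matrix (Fin n) (Fin n) ℝ
  Vdollar : Matrix (Fin n) (Fin n) ℝ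
  ds : ∀ a, DoublyStochastic (V a)
  ds_hash : DoublyStochastic Vhash
  ds_dollar : DoublyStochastic Vdollar

namespace PRAC

variable {α : Type}

/-- Acceptance probability of a word `w = σ₁…σ_k`: the total mass on accepting states of
`V_$ ⬝ V_{σ_k} ⬝ ⋯ ⬝ V_{σ₁} ⬝ V_# ⬝ e_{q₀}`. -/
def accProb (A : PRAC α) (w : List α) : ℝ :=
  ∑ q ∈ A.F,
    (A.Vdollar.mulVec
      (w.foldl (fun v a => (A.V a).mulVec v) (A.Vhash.mulVec (Pi.single A.q0 1)))) q

/-- Recognition of a language with interval `(p₁, p₂)`. -/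
def Recognizes (A : PRAC α) (L : Set (List α)) (p1 p2 : ℝ) : Prop :=
  0 ≤ p1 ∧ p1 < p2 ∧ p2 ≤ 1 ∧
  (∀ w ∈ L, p2 ≤ A.accProb w) ∧ (∀ w ∉ L, A.accProb w ≤ p1)

/-- Recognition with probability `p`, i.e. with interval `(1 - p, p)`. -/
def RecognizesWithProb (A : PRAC α) (L : Set (List α)) (p : ℝ) : Prop :=
  A.Recognizes L (1 - p) p

end PRAC

/-!
The matrices `X`, `Y` of the words `x`, `y` are doubly stochastic, hence contractions of `ℓ²`
(Birkhoff–von Neumann). The acceptance probability of `ω s z` is `⟪c, W_s v⟫` for fixed vectors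
`v`, `c`. If `ω x u z ∈ L` and `ω y u z ∉ L` for every `u ∈ {x, y}*`, then
`⟪c, T (X v - Y v)⟫ ≥ p₂ - p₁ > 0` for every `T` in the monoid generated by `X` and `Y`;
averaging, this also holds for `T = ((X + Y) / 2) ^ k`. But a fixed vector of the midpoint of two
contractions is fixed by both of them and by their adjoints, so `X v - Y v` is orthogonal to the
fixed vectors of `(X + Y) / 2`, and by von Neumann's mean ergodic theorem the Cesàro means of
`((X + Y) / 2) ^ k (X v - Y v)` tend to `0`: a contradiction. In the DFA every word of `{x, y}*`
fixes `q₁` and `q₂`, so `ω x u z` and `ω y u z` end in `q₁ z` and `q₂ z`, exactly one of which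
is accepting.
-/

open Filter Topology
open scoped RealInnerProductSpace

theorem le_birkhoffAverage {α : Type*} {f : α → α} {g : α → ℝ} {x : α} {γ : ℝ}
    (h : ∀ k, γ ≤ g (f^[k] x)) {N : ℕ} (hN : 0 < N) : γ ≤ birkhoffAverage ℝ f g N x := by
  rw [birkhoffAverage, birkhoffSum, smul_eq_mul, le_inv_mul_iff₀ (by positivity)]
  simpa using Finset.card_nsmul_le_sum (Finset.range N) _ γ fun k _ => h k

section Contraction

variable {E : Type*} [NormedAddCommGroup E] [InnerProductSpace ℝ E]

theorem eq_of_midpoint_eq_of_norm_le {a b r : E} (ha : ‖a‖ ≤ ‖r‖) (hb : ‖b‖ ≤ ‖r‖)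
    (h : (2⁻¹ : ℝ) • (a + b) = r) : a = r := by
  have hab : a + b = (2 : ℝ) • r := by rw [← h, smul_smul]; norm_num
  have hsum : ⟪a, r⟫ + ⟪b, r⟫ = 2 * ‖r‖ ^ 2 := by
    rw [← inner_add_left, hab, real_inner_smul_left, real_inner_self_eq_norm_sq]
  have hle : ∀ d : E, ‖d‖ ≤ ‖r‖ → ⟪d, r⟫ ≤ ‖r‖ ^ 2 := fun d hd =>
    (real_inner_le_norm d r).trans (by rw [sq]; gcongr)
  refine eq_of_norm_le_re_inner_eq_norm_sq (𝕜 := ℝ) ha ?_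
  simp only [RCLike.re_to_real]
  linarith [hle a ha, hle b hb]

theorem forall_le_inner_apply_midpoint {A B : E →L[ℝ] E} {S : Submonoid (E →L[ℝ] E)}
    (hAS : A ∈ S) (hBS : B ∈ S) {c u : E} {γ : ℝ} (h : ∀ T ∈ S, γ ≤ ⟪c, T u⟫) :
    ∀ T ∈ S, γ ≤ ⟪c, T ((2⁻¹ : ℝ) • (A + B) u)⟫ := by
  intro T hT
  have hA := h _ (S.mul_mem hT hAS)
  have hB := h _ (S.mul_mem hT hBS)
  simp only [mul_apply_eq_comp] at hA hB
  simp only [add_apply, map_smul, map_add, real_inner_smul_right, inner_add_right]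
  linarith

variable [CompleteSpace E]

namespace ContinuousLinearMap

theorem adjoint_apply_eq_of_apply_eq {A : E →L[ℝ] E} (hA : ‖A‖ ≤ 1) {r : E} (hr : A r = r) :
    adjoint A r = r := by
  refine eq_of_norm_le_re_inner_eq_norm_sq (𝕜 := ℝ) ?_ ?_
  · calc ‖adjoint A r‖ ≤ ‖adjoint A‖ * ‖r‖ := (adjoint A).le_opNorm r
      _ ≤ ‖r‖ := by
        rw [LinearIsometryEquiv.norm_map]
        exact mul_le_of_le_one_left (norm_nonneg r) hA
  · rw [RCLike.re_to_real, adjoint_inner_left, hr, real_inner_self_eq_norm_sq]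

theorem apply_sub_apply_mem_orthogonal_eqLocus {A B : E →L[ℝ] E} (hA : ‖A‖ ≤ 1)
    (hB : ‖B‖ ≤ 1) (v : E) :
    A v - B v ∈ (((2⁻¹ : ℝ) • (A + B)).eqLocus (1 : E →L[ℝ] E))ᗮ := by
  rw [Submodule.mem_orthogonal']
  intro r hr
  have hr : (2⁻¹ : ℝ) • (A r + B r) = r := hr
  have hAr' : ‖A r‖ ≤ ‖r‖ := by simpa using A.le_of_opNorm_le hA r
  have hBr' : ‖B r‖ ≤ ‖r‖ := by simpa using B.le_of_opNorm_le hB r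
  have hAr : A r = r := eq_of_midpoint_eq_of_norm_le hAr' hBr' hr
  have hBr : B r = r := eq_of_midpoint_eq_of_norm_le hBr' hAr' (by rwa [add_comm])
  rw [inner_sub_left, ← adjoint_inner_right, ← adjoint_inner_right,
    adjoint_apply_eq_of_apply_eq hA hAr, adjoint_apply_eq_of_apply_eq hB hBr, sub_self]

end ContinuousLinearMap

theorem exists_inner_apply_lt_inner_apply_add {A B : E →L[ℝ] E} (hA : ‖A‖ ≤ 1) (hB : ‖B‖ ≤ 1)
    {S : Submonoid (E →L[ℝ] E)} (hAS : A ∈ S) (hBS : B ∈ S) (v c : E) {γ : ℝ} (hγ : 0 < γ) :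
    ∃ T ∈ S, ⟪c, T (A v)⟫ < ⟪c, T (B v)⟫ + γ := by
  by_contra! hsep
  set D : E →L[ℝ] E := (2⁻¹ : ℝ) • (A + B)
  have hD : ‖D‖ ≤ 1 :=
    calc ‖D‖ ≤ ‖(2⁻¹ : ℝ)‖ * ‖A + B‖ := ContinuousLinearMap.opNorm_smul_le _ _
      _ ≤ 2⁻¹ * (1 + 1) := by
        rw [norm_inv, Real.norm_two]
        gcongr
        exact (norm_add_le A B).trans (add_le_add hA hB)
      _ = 1 := by norm_num
  have hiter : ∀ k, ∀ T ∈ S, γ ≤ ⟪c, T (D^[k] (A v - B v))⟫ := by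
    intro k
    induction k with
    | zero =>
      intro T hT
      have := hsep T hT
      simp only [Function.iterate_zero, id, map_sub, inner_sub_right]
      linarith
    | succ k ih =>
      rw [Function.iterate_succ_apply']
      exact forall_le_inner_apply_midpoint hAS hBS ih
  have havg : ∀ᶠ N in atTop, γ ≤ ⟪c, birkhoffAverage ℝ D id N (A v - B v)⟫ := by
    filter_upwards [eventually_gt_atTop 0] with N hN
    rw [← innerSL_apply_apply, map_birkhoffAverage ℝ ℝ (innerSL ℝ c)]
    exact le_birkhoffAverage (fun k => by simpa using hiter k 1 S.one_mem) hN
  have hlim : Tendsto (fun N => ⟪c, birkhoffAverage ℝ D id N (A v - B v)⟫) atTop (𝓝 0) := by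
    have := D.tendsto_birkhoffAverage_orthogonalProjection hD (A v - B v)
    rw [Submodule.orthogonalProjectionOnto_eq_zero_iff.2
      (ContinuousLinearMap.apply_sub_apply_mem_orthogonal_eqLocus hA hB v)] at this
    simpa using tendsto_const_nhds.inner this
  exact hγ.not_ge (ge_of_tendsto hlim havg)

end Contraction

theorem DoublyStochastic.mem_doublyStochastic {n : ℕ} {M : Matrix (Fin n) (Fin n) ℝ}
    (hM : DoublyStochastic M) : M ∈ doublyStochastic ℝ (Fin n) :=
  mem_doublyStochastic_iff_sum.2 hM

namespace PRAC

open Matrix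
open scoped Matrix.Norms.L2Operator

variable {α : Type} (A : PRAC α)

def wordMatrix (w : List α) : Matrix (Fin A.n) (Fin A.n) ℝ :=
  (w.reverse.map A.V).prod

theorem wordMatrix_append (u v : List α) :
    A.wordMatrix (u ++ v) = A.wordMatrix v * A.wordMatrix u := by
  simp [wordMatrix]

theorem foldl_mulVec (w : List α) (v : Fin A.n → ℝ) :
    w.foldl (fun v a => A.V a *ᵥ v) v = A.wordMatrix w *ᵥ v := by
  induction w generalizing v with
  | nil => simp [wordMatrix]
  | cons a w ih =>
    rw [List.foldl_cons, ih, ← List.singleton_append, wordMatrix_append, ← mulVec_mulVec]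
    simp [wordMatrix]

theorem wordMatrix_mem_doublyStochastic (w : List α) :
    A.wordMatrix w ∈ doublyStochastic ℝ (Fin A.n) :=
  Submonoid.list_prod_mem _ (by simpa using fun a _ => (A.ds a).mem_doublyStochastic)

noncomputable def wordOp (w : List α) :
    EuclideanSpace ℝ (Fin A.n) →L[ℝ] EuclideanSpace ℝ (Fin A.n) :=
  toEuclideanCLM (n := Fin A.n) (𝕜 := ℝ) (A.wordMatrix w)

theorem norm_wordOp_le_one (w : List α) : ‖A.wordOp w‖ ≤ 1 :=
  l2_opNorm_le_one_of_mem_doublyStochastic (A.wordMatrix_mem_doublyStochastic w)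

theorem wordOp_append (u v : List α) : A.wordOp (u ++ v) = A.wordOp v * A.wordOp u := by
  rw [wordOp, wordMatrix_append, map_mul]; rfl

theorem exists_word_of_mem_closure {P : List α → Prop} (hnil : P [])
    (happend : ∀ u v, P u → P v → P (u ++ v)) {x y : List α} (hx : P x) (hy : P y)
    {T : EuclideanSpace ℝ (Fin A.n) →L[ℝ] EuclideanSpace ℝ (Fin A.n)}
    (hT : T ∈ Submonoid.closure {A.wordOp x, A.wordOp y}) : ∃ u, P u ∧ T = A.wordOp u := by
  induction hT using Submonoid.closure_induction with
  | mem T hT =>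
    rcases hT with rfl | rfl
    exacts [⟨x, hx, rfl⟩, ⟨y, hy, rfl⟩]
  | one => exact ⟨[], hnil, by simp [wordOp, wordMatrix]⟩
  | mul S T _ _ hS hT =>
    obtain ⟨u, hu, rfl⟩ := hS
    obtain ⟨v, hv, rfl⟩ := hT
    exact ⟨v ++ u, happend v u hv hu, (A.wordOp_append v u).symm⟩

theorem exists_accProb_append_eq_inner (ω z : List α) :
    ∃ v c : EuclideanSpace ℝ (Fin A.n),
      ∀ s, A.accProb (ω ++ s ++ z) = ⟪c, A.wordOp s v⟫ := by
  refine ⟨WithLp.toLp 2 (A.wordMatrix ω *ᵥ A.Vhash *ᵥ Pi.single A.q0 1),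
    WithLp.toLp 2 ((fun q => if q ∈ A.F then 1 else 0) ᵥ* (A.Vdollar * A.wordMatrix z)),
    fun s => ?_⟩
  rw [wordOp, inner_toEuclideanCLM, accProb, foldl_mulVec, wordMatrix_append, wordMatrix_append,
    ← dotProduct_mulVec]
  simp only [mulVec_mulVec, Matrix.mul_assoc]
  simp [dotProduct, ite_mul]

theorem Recognizes.exists_mem_imp_mem {A : PRAC α} {L : Set (List α)} {p1 p2 : ℝ}
    (hA : A.Recognizes L p1 p2) {P : List α → Prop} (hnil : P [])
    (happend : ∀ u v, P u → P v → P (u ++ v)) {x y : List α} (hx : P x) (hy : P y)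
    (ω z : List α) : ∃ u, P u ∧ (ω ++ (x ++ u) ++ z ∈ L → ω ++ (y ++ u) ++ z ∈ L) := by
  obtain ⟨-, hp, -, hL, hLc⟩ := hA
  obtain ⟨v, c, hacc⟩ := A.exists_accProb_append_eq_inner ω z
  obtain ⟨T, hT, hlt⟩ := exists_inner_apply_lt_inner_apply_add (A.norm_wordOp_le_one x)
    (A.norm_wordOp_le_one y) (S := Submonoid.closure {A.wordOp x, A.wordOp y})
    (Submonoid.subset_closure (by simp)) (Submonoid.subset_closure (by simp)) v c (sub_pos.2 hp)
  obtain ⟨u, hu, rfl⟩ := A.exists_word_of_mem_closure hnil happend hx hy hT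
  refine ⟨u, hu, fun hxu => by_contra fun hyu => ?_⟩
  have hx' := hL _ hxu
  have hy' := hLc _ hyu
  rw [hacc, wordOp_append, mul_apply_eq_comp] at hx' hy'
  linarith

end PRAC

theorem typeStar'_not_recognizable_by_prac_general {α σ : Type}
    (L : Set (List α)) (D : DFA α σ) (hD : ∀ w, w ∈ D.accepts ↔ w ∈ L)
    (q q1 q2 : σ) (ω x y z : List α)
    (hω : D.evalFrom D.start ω = q)
    (hqx : D.evalFrom q x = q1) (hqy : D.evalFrom q y = q2)
    (h1x : D.evalFrom q1 x = q1) (h1y : D.evalFrom q1 y = q1)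
    (h2x : D.evalFrom q2 x = q2) (h2y : D.evalFrom q2 y = q2)
    (hz : Xor' (D.evalFrom q1 z ∈ D.accept) (D.evalFrom q2 z ∈ D.accept)) :
    ¬ ∃ (A : PRAC α) (p1 p2 : ℝ), A.Recognizes L p1 p2 := by
  rintro ⟨A, p1, p2, hA⟩
  let Loop (u : List α) : Prop := D.evalFrom q1 u = q1 ∧ D.evalFrom q2 u = q2
  have hnil : Loop [] := ⟨rfl, rfl⟩
  have happend : ∀ u v, Loop u → Loop v → Loop (u ++ v) := fun u v hu hv => by
    simp only [Loop, DFA.evalFrom_of_append, hu.1, hu.2, hv.1, hv.2, and_self]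
  have hmem : ∀ {s a u}, D.evalFrom q s = a → D.evalFrom a u = a →
      (ω ++ (s ++ u) ++ z ∈ L ↔ D.evalFrom a z ∈ D.accept) := fun hs hu => by
    rw [← hD, DFA.mem_accepts, DFA.eval, DFA.evalFrom_of_append, DFA.evalFrom_of_append,
      DFA.evalFrom_of_append, hω, hs, hu]
  rcases hz with ⟨h1, h2⟩ | ⟨h2, h1⟩
  · obtain ⟨u, hu, himp⟩ :=
      PRAC.Recognizes.exists_mem_imp_mem hA hnil happend ⟨h1x, h2x⟩ ⟨h1y, h2y⟩ ω z
    exact h2 ((hmem hqy hu.2).1 (himp ((hmem hqx hu.1).2 h1)))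
  · obtain ⟨u, hu, himp⟩ :=
      PRAC.Recognizes.exists_mem_imp_mem hA hnil happend ⟨h1y, h2y⟩ ⟨h1x, h2x⟩ ω z
    exact h1 ((hmem hqx hu.1).1 (himp ((hmem hqy hu.2).2 h2)))

/-- If a regular language is of type `(*')`, it is not recognizable by any PRA-C. -/
theorem typeStar'_not_recognizable_by_prac {α σ : Type} [Fintype σ]
    (L : Set (List α)) (D : DFA α σ) (hD : ∀ w, w ∈ D.accepts ↔ w ∈ L)
    (q q1 q2 : σ) (ω x y z : List α)
    (hω : D.evalFrom D.start ω = q)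
    (hqx : D.evalFrom q x = q1) (hqy : D.evalFrom q y = q2)
    (h1x : D.evalFrom q1 x = q1) (h1y : D.evalFrom q1 y = q1)
    (h2x : D.evalFrom q2 x = q2) (h2y : D.evalFrom q2 y = q2)
    (hz : Xor' (D.evalFrom q1 z ∈ D.accept) (D.evalFrom q2 z ∈ D.accept)) :
    ¬ ∃ (A : PRAC α) (p1 p2 : ℝ), A.Recognizes L p1 p2 :=
  typeStar'_not_recognizable_by_prac_general L D hD q q1 q2 ω x y z hω hqx hqy h1x h1y h2x h2y hz
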